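/- arXiv:1503.08323 — 7 statements merged into one kernel-verified Lean document; each statement's English description precedes it below -/
import Mathlib

section
/- (Correctness of reduction R1.) Let G be a finite simple graph with cardinality function c and let v be an isolated vertex of G (a vertex of degree 0). Then c(G) = (c0(v) + c1(v)) * c(G - v), where G - v denotes the induced subgraph on V(G) \ {v} with the weights of c restricted to its vertices and edges. -/
open Finset

noncomputable section
open scoped Classical

variable {V : Type*}

/-- `S` is an independent set of the simple graph `G`. -/
def Indep (G : SimpleGraph V) (S : Finset V) : Prop :=
  ∀ u ∈ S, ∀ w ∈ S, ¬ G.Adj u w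

/-- Independent sets of the induced subgraph `G[W]`. -/
def indepOn [Fintype V] (G : SimpleGraph V) (W : Finset V) : Finset (Finset V) :=
  univ.filter fun S => S ⊆ W ∧ Indep G S

/-- Weight `c_{G[W]}(S)` of an independent set `S` of `G[W]` with respect to the
cardinality function given by vertex weights `c1, c0` and edge weights `ce`. -/
def wt [Fintype V] (G : SimpleGraph V) (c1 c0 : V → ℚ) (ce : Sym2 V → ℚ)
    (W S : Finset V) : ℚ :=
  (∏ v ∈ S, c1 v) * (∏ v ∈ W \ S, c0 v) *
    ∏ e ∈ G.edgeFinset.filter (fun e => (∀ x ∈ e, x ∈ W) ∧ ∀ x ∈ e, x ∉ S), ce e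

/-- `c(G[W])`: the weighted sum over all independent sets of `G[W]`. -/
def tot [Fintype V] (G : SimpleGraph V) (c1 c0 : V → ℚ) (ce : Sym2 V → ℚ)
    (W : Finset V) : ℚ :=
  ∑ S ∈ indepOn G W, wt G c1 c0 ce W S

/-- `c(G[W], v^η)`: the weighted sum over independent sets `S` of `G[W]` with
`v ∈ S` iff `η = 1`. -/
def totC [Fintype V] (G : SimpleGraph V) (c1 c0 : V → ℚ) (ce : Sym2 V → ℚ)
    (W : Finset V) (v : V) (η : Bool) : ℚ :=
  ∑ S ∈ (indepOn G W).filter (fun S => v ∈ S ↔ η = true), wt G c1 c0 ce W S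

/-- `c(G[W], u^ζ, v^η)`. -/
def totC2 [Fintype V] (G : SimpleGraph V) (c1 c0 : V → ℚ) (ce : Sym2 V → ℚ)
    (W : Finset V) (u v : V) (ζ η : Bool) : ℚ :=
  ∑ S ∈ (indepOn G W).filter (fun S => (u ∈ S ↔ ζ = true) ∧ (v ∈ S ↔ η = true)),
    wt G c1 c0 ce W S


/-!
Independent sets of `G[W]` split according to whether they contain `v`. Those avoiding `v` are
exactly the independent sets of `G[W - v]`, and since `v` has no neighbour in `W`, `T ↦ insert v T`
is a bijection from the independent sets of `G[W - v]` onto those containing `v`. No edge of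
`G[W]` meets `v`, so the weight only changes by the factor `c0 v`, resp. `c1 v`.
-/

section Isolated

variable {G : SimpleGraph V} {W S S' : Finset V} {v : V}

lemma indep_insert_of_isolated (hv : ∀ u ∈ W, ¬ G.Adj v u) (hSW : S ⊆ W) (hS : Indep G S) :
    Indep G (insert v S) := by
  intro a ha b hb hab
  rcases mem_insert.1 ha with rfl | haS <;> rcases mem_insert.1 hb with rfl | hbS
  · exact G.irrefl hab
  · exact hv _ (hSW hbS) hab
  · exact hv _ (hSW haS) hab.symm
  · exact hS a haS b hbS hab

variable [Fintype V]

lemma notMem_of_isolated (hv : ∀ u ∈ W, ¬ G.Adj v u) {e : Sym2 V} (he : e ∈ G.edgeFinset)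
    (heW : ∀ x ∈ e, x ∈ W) : v ∉ e := fun hve => by
  rw [SimpleGraph.mem_edgeFinset, ← Sym2.other_spec hve, SimpleGraph.mem_edgeSet] at he
  exact hv _ (heW _ (Sym2.other_mem hve)) he

lemma filter_edgeFinset_erase_of_isolated (hv : ∀ u ∈ W, ¬ G.Adj v u)
    (hSS' : ∀ x, x ≠ v → (x ∈ S ↔ x ∈ S')) :
    G.edgeFinset.filter (fun e => (∀ x ∈ e, x ∈ W) ∧ ∀ x ∈ e, x ∉ S) =
      G.edgeFinset.filter (fun e => (∀ x ∈ e, x ∈ W.erase v) ∧ ∀ x ∈ e, x ∉ S') := by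
  refine filter_congr fun e he => ⟨fun ⟨heW, heS⟩ => ?_, fun ⟨heW, heS⟩ => ?_⟩
  · have hne : ∀ x ∈ e, x ≠ v := fun x hx hxv => notMem_of_isolated hv he heW (hxv ▸ hx)
    exact ⟨fun x hx => mem_erase.2 ⟨hne x hx, heW x hx⟩,
      fun x hx => (hSS' x (hne x hx)).not.1 (heS x hx)⟩
  · exact ⟨fun x hx => mem_of_mem_erase (heW x hx),
      fun x hx => (hSS' x (ne_of_mem_erase (heW x hx))).not.2 (heS x hx)⟩

lemma filter_notMem_indepOn : (indepOn G W).filter (v ∉ ·) = indepOn G (W.erase v) := by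
  ext S
  simp only [indepOn, mem_filter, mem_univ, true_and, subset_erase]
  tauto

lemma filter_mem_indepOn_of_isolated (hv : ∀ u ∈ W, ¬ G.Adj v u) (hvW : v ∈ W) :
    (indepOn G W).filter (v ∈ ·) = (indepOn G (W.erase v)).image (insert v) := by
  ext S
  simp only [indepOn, mem_filter, mem_univ, true_and, mem_image]
  constructor
  · rintro ⟨⟨hSW, hS⟩, hvS⟩
    exact ⟨S.erase v, ⟨erase_subset_erase v hSW,
      fun a ha b hb => hS a (mem_of_mem_erase ha) b (mem_of_mem_erase hb)⟩, insert_erase hvS⟩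
  · rintro ⟨T, ⟨hTW, hT⟩, rfl⟩
    have hTW' : T ⊆ W := hTW.trans (erase_subset v W)
    exact ⟨⟨insert_subset hvW hTW', indep_insert_of_isolated hv hTW' hT⟩, mem_insert_self v T⟩

variable (c1 c0 : V → ℚ) (ce : Sym2 V → ℚ)

lemma wt_erase_of_isolated_of_notMem (hv : ∀ u ∈ W, ¬ G.Adj v u) (hvW : v ∈ W) (hvS : v ∉ S) :
    wt G c1 c0 ce W S = c0 v * wt G c1 c0 ce (W.erase v) S := by
  rw [wt, wt, filter_edgeFinset_erase_of_isolated hv (fun _ _ => Iff.rfl), erase_sdiff_comm,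
    ← mul_prod_erase _ _ (mem_sdiff.2 ⟨hvW, hvS⟩)]
  ring

lemma wt_insert_of_isolated (hv : ∀ u ∈ W, ¬ G.Adj v u) (hvS : v ∉ S) :
    wt G c1 c0 ce W (insert v S) = c1 v * wt G c1 c0 ce (W.erase v) S := by
  rw [wt, wt, filter_edgeFinset_erase_of_isolated hv (S' := S) (fun x hx => by simp [hx]),
    sdiff_insert, ← erase_sdiff_comm, prod_insert hvS]
  ring

theorem tot_eq_mul_tot_erase_of_isolated (hv : ∀ u ∈ W, ¬ G.Adj v u) (hvW : v ∈ W) :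
    tot G c1 c0 ce W = (c0 v + c1 v) * tot G c1 c0 ce (W.erase v) := by
  have hvS : ∀ S ∈ indepOn G (W.erase v), v ∉ S := fun S hS hvS =>
    notMem_erase v W ((mem_filter.1 hS).2.1 hvS)
  rw [tot, ← sum_filter_not_add_sum_filter _ (v ∈ ·), filter_notMem_indepOn,
    filter_mem_indepOn_of_isolated hv hvW,
    sum_image fun S hS T hT h => by rw [← erase_insert (hvS S hS), h, erase_insert (hvS T hT)],
    tot, add_mul, mul_sum, mul_sum]
  congr 1 <;> refine sum_congr rfl fun S hS => ?_
  · exact wt_erase_of_isolated_of_notMem c1 c0 ce hv hvW (hvS S hS)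
  · exact wt_insert_of_isolated c1 c0 ce hv (hvS S hS)

end Isolated

/-- Correctness of reduction R1: if `v` is an isolated vertex of `G`,
then `c(G) = (c0(v) + c1(v)) * c(G - v)`. -/
theorem tot_isolated [Fintype V] (G : SimpleGraph V)
    (c1 c0 : V → ℚ) (ce : Sym2 V → ℚ) (v : V) (hv : ∀ u, ¬ G.Adj v u) :
    tot G c1 c0 ce univ = (c0 v + c1 v) * tot G c1 c0 ce ({v} : Finset V)ᶜ := by
  rw [compl_singleton]
  exact tot_eq_mul_tot_erase_of_isolated c1 c0 ce (fun u _ => hv u) (mem_univ v)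
end
end

section
/- (Correctness of reduction R2.) Let G be a finite simple graph with cardinality function c, let v be a leaf of G (a vertex of degree 1) and let u be its unique neighbour. Define a new cardinality function c' on G - v that agrees with c everywhere except c'_0(u) = c0(u) * (c1(v) + c0(v) * c0(uv)) and c'_1(u) = c1(u) * c0(v). Then c(G) computed with c equals c(G - v) computed with c'. -/
open Finset

noncomputable section
open scoped Classical

variable {V : Type*}

/-!
Sort the independent sets of `G` by whether they contain the leaf `v`. Those avoiding `v` are
exactly the independent sets `S` of `G - v`; those containing `v` are the sets `S + v` with `S`
independent in `G - v` and `u ∉ S`. Comparing weights: if `u ∈ S`, the weight of `S` in `G` is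
`c0(v)` times its weight in `G - v`, the factor moved into `c'_1(u)`; if `u ∉ S`, the weights of
`S` and `S + v` in `G` add up to `c0(v) c0(uv) + c1(v)` times the weight of `S` in `G - v`, the
factor moved into `c'_0(u)`.
-/

lemma Indep.mono {G : SimpleGraph V} {S T : Finset V} (hT : Indep G T) (hST : S ⊆ T) :
    Indep G S :=
  fun a ha b hb => hT a (hST ha) b (hST hb)

lemma Indep.insert {G : SimpleGraph V} {S : Finset V} {v : V} (hS : Indep G S)
    (hv : ∀ w ∈ S, ¬ G.Adj v w) : Indep G (insert v S) := by
  intro a ha b hb hab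
  rw [mem_insert] at ha hb
  rcases ha with rfl | ha <;> rcases hb with rfl | hb
  · exact G.loopless.irrefl _ hab
  · exact hv _ hb hab
  · exact hv _ ha hab.symm
  · exact hS a ha b hb hab

section Leaf

variable {G : SimpleGraph V} {v u : V}

lemma eq_of_mem_edgeSet_of_leaf (hleaf : ∀ w, G.Adj v w → w = u) {e : Sym2 V}
    (he : e ∈ G.edgeSet) (hv : v ∈ e) : e = s(u, v) := by
  obtain ⟨w, rfl⟩ := Sym2.mem_iff_exists.mp hv
  rw [hleaf w he, Sym2.eq_swap]

lemma forall_not_adj_iff_of_leaf (huv : G.Adj v u) (hleaf : ∀ w, G.Adj v w → w = u)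
    (S : Finset V) : (∀ w ∈ S, ¬ G.Adj v w) ↔ u ∉ S :=
  ⟨fun h hu => h u hu huv, fun hu w hw hvw => hu (hleaf w hvw ▸ hw)⟩

end Leaf

def edgesAvoiding [Fintype V] (G : SimpleGraph V) (W S : Finset V) : Finset (Sym2 V) :=
  G.edgeFinset.filter fun e => (∀ x ∈ e, x ∈ W) ∧ ∀ x ∈ e, x ∉ S

section Weights

variable [Fintype V] {G : SimpleGraph V} {c1 c0 : V → ℚ} {ce : Sym2 V → ℚ}
  {W S : Finset V} {v u : V}

lemma wt_eq_prod_edgesAvoiding (W S : Finset V) :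
    wt G c1 c0 ce W S =
      (∏ x ∈ S, c1 x) * (∏ x ∈ W \ S, c0 x) * ∏ e ∈ edgesAvoiding G W S, ce e :=
  rfl

lemma mem_indepOn : S ∈ indepOn G W ↔ S ⊆ W ∧ Indep G S := by
  simp [indepOn]

lemma filter_notMem_indepOn_insert (hvW : v ∉ W) :
    (indepOn G (insert v W)).filter (v ∉ ·) = indepOn G W := by
  ext S
  simp only [mem_filter, mem_indepOn]
  constructor
  · rintro ⟨⟨hSW, hS⟩, hvS⟩
    exact ⟨(subset_insert_iff_of_notMem hvS).mp hSW, hS⟩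
  · rintro ⟨hSW, hS⟩
    exact ⟨⟨hSW.trans (subset_insert v W), hS⟩, fun hvS => hvW (hSW hvS)⟩

lemma sum_filter_mem_indepOn_insert (hvW : v ∉ W) (f : Finset V → ℚ) :
    ∑ S ∈ (indepOn G (insert v W)).filter (v ∈ ·), f S =
      ∑ S ∈ (indepOn G W).filter (fun S => ∀ w ∈ S, ¬ G.Adj v w), f (insert v S) := by
  refine sum_nbij' (·.erase v) (insert v ·) ?_ ?_ ?_ ?_ ?_
  · intro T hT
    simp only [mem_filter, mem_indepOn] at hT ⊢
    obtain ⟨⟨hTW, hT⟩, hvT⟩ := hT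
    exact ⟨⟨subset_insert_iff.mp hTW, hT.mono (erase_subset v T)⟩,
      fun w hw => hT v hvT w (mem_of_mem_erase hw)⟩
  · intro S hS
    simp only [mem_filter, mem_indepOn] at hS ⊢
    obtain ⟨⟨hSW, hS⟩, hv⟩ := hS
    exact ⟨⟨insert_subset_insert v hSW, hS.insert hv⟩, mem_insert_self v S⟩
  · intro T hT
    exact insert_erase (mem_filter.mp hT).2
  · intro S hS
    exact erase_insert fun hvS => hvW ((mem_indepOn.mp (mem_filter.mp hS).1).1 hvS)
  · intro T hT
    rw [insert_erase (mem_filter.mp hT).2]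

lemma tot_insert (hvW : v ∉ W) :
    tot G c1 c0 ce (insert v W) = ∑ S ∈ indepOn G W, (wt G c1 c0 ce (insert v W) S +
      if ∀ w ∈ S, ¬ G.Adj v w then wt G c1 c0 ce (insert v W) (insert v S) else 0) := by
  rw [tot, ← sum_filter_add_sum_filter_not _ (v ∈ ·), add_comm, filter_notMem_indepOn_insert hvW,
    sum_filter_mem_indepOn_insert hvW, sum_add_distrib, sum_filter]

lemma edgesAvoiding_insert_insert (hvW : v ∉ W) :
    edgesAvoiding G (insert v W) (insert v S) = edgesAvoiding G W S := by
  refine filter_congr fun e _ => ?_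
  simp only [mem_insert, not_or]
  constructor
  · rintro ⟨hW, hS⟩
    exact ⟨fun x hx => (hW x hx).resolve_left (hS x hx).1, fun x hx => (hS x hx).2⟩
  · rintro ⟨hW, hS⟩
    exact ⟨fun x hx => Or.inr (hW x hx), fun x hx => ⟨fun h => hvW (h ▸ hW x hx), hS x hx⟩⟩

lemma edgesAvoiding_insert_of_leaf_of_mem (hleaf : ∀ w, G.Adj v w → w = u) (hu : u ∈ S) :
    edgesAvoiding G (insert v W) S = edgesAvoiding G W S := by
  refine filter_congr fun e he => ⟨fun ⟨hW, hS⟩ => ⟨fun x hx => ?_, hS⟩,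
    fun ⟨hW, hS⟩ => ⟨fun x hx => mem_insert_of_mem (hW x hx), hS⟩⟩
  rcases mem_insert.mp (hW x hx) with rfl | hxW
  · have he_eq := eq_of_mem_edgeSet_of_leaf hleaf (SimpleGraph.mem_edgeFinset.mp he) hx
    exact absurd hu (hS u (he_eq ▸ Sym2.mem_mk_left u x))
  · exact hxW

lemma edgesAvoiding_insert_of_leaf_of_notMem (huv : G.Adj v u)
    (hleaf : ∀ w, G.Adj v w → w = u) (huW : u ∈ W) (hvS : v ∉ S) (hu : u ∉ S) :
    edgesAvoiding G (insert v W) S = insert s(u, v) (edgesAvoiding G W S) := by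
  ext e
  simp only [edgesAvoiding, mem_insert, mem_filter]
  constructor
  · rintro ⟨he, hW, hS⟩
    by_cases hve : v ∈ e
    · exact Or.inl (eq_of_mem_edgeSet_of_leaf hleaf (SimpleGraph.mem_edgeFinset.mp he) hve)
    · exact Or.inr ⟨he, fun x hx => (hW x hx).resolve_left (fun h => hve (h ▸ hx)), hS⟩
  · rintro (rfl | ⟨he, hW, hS⟩)
    · refine ⟨SimpleGraph.mem_edgeFinset.mpr huv.symm, fun x hx => ?_, fun x hx => ?_⟩ <;>
        rcases Sym2.mem_iff.mp hx with rfl | rfl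
      exacts [Or.inr huW, Or.inl rfl, hu, hvS]
    · exact ⟨he, fun x hx => Or.inr (hW x hx), hS⟩

lemma wt_insert_insert (hvW : v ∉ W) (hvS : v ∉ S) :
    wt G c1 c0 ce (insert v W) (insert v S) = c1 v * wt G c1 c0 ce W S := by
  rw [wt_eq_prod_edgesAvoiding, wt_eq_prod_edgesAvoiding, prod_insert hvS, insert_sdiff_insert,
    sdiff_insert_of_notMem hvW, edgesAvoiding_insert_insert hvW]
  ring

lemma wt_insert_of_leaf (huv : G.Adj v u) (hleaf : ∀ w, G.Adj v w → w = u) (huW : u ∈ W)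
    (hvW : v ∉ W) (hvS : v ∉ S) :
    wt G c1 c0 ce (insert v W) S =
      c0 v * (if u ∈ S then 1 else ce s(u, v)) * wt G c1 c0 ce W S := by
  have hvWS : v ∉ W \ S := fun h => hvW (mem_sdiff.mp h).1
  rw [wt_eq_prod_edgesAvoiding, wt_eq_prod_edgesAvoiding, insert_sdiff_of_notMem _ hvS,
    prod_insert hvWS]
  split_ifs with hu
  · rw [edgesAvoiding_insert_of_leaf_of_mem hleaf hu]
    ring
  · have huv_notMem : s(u, v) ∉ edgesAvoiding G W S :=
      fun h => hvW ((mem_filter.mp h).2.1 v (Sym2.mem_mk_right u v))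
    rw [edgesAvoiding_insert_of_leaf_of_notMem huv hleaf huW hvS hu, prod_insert huv_notMem]
    ring

lemma wt_update_c1_of_mem (hu : u ∈ S) (a : ℚ) :
    wt G (Function.update c1 u (c1 u * a)) c0 ce W S = a * wt G c1 c0 ce W S := by
  rw [wt, wt, prod_update_of_mem hu, ← mul_prod_erase S c1 hu, sdiff_singleton_eq_erase]
  ring

lemma wt_update_c1_of_notMem (hu : u ∉ S) (b : ℚ) :
    wt G (Function.update c1 u b) c0 ce W S = wt G c1 c0 ce W S := by
  rw [wt, wt, prod_update_of_notMem hu]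

lemma wt_update_c0_of_mem (hu : u ∈ W \ S) (a : ℚ) :
    wt G c1 (Function.update c0 u (c0 u * a)) ce W S = a * wt G c1 c0 ce W S := by
  rw [wt, wt, prod_update_of_mem hu, ← mul_prod_erase _ c0 hu, sdiff_singleton_eq_erase]
  ring

lemma wt_update_c0_of_notMem (hu : u ∉ W \ S) (b : ℚ) :
    wt G c1 (Function.update c0 u b) ce W S = wt G c1 c0 ce W S := by
  rw [wt, wt, prod_update_of_notMem hu]

end Weights

/-- Correctness of reduction R2: if `v` is a leaf of `G` with unique
neighbour `u`, and `c'` agrees with `c` except that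
`c'_0(u) = c0(u) * (c1(v) + c0(v) * c0(uv))` and `c'_1(u) = c1(u) * c0(v)`, then
`c(G)` with respect to `c` equals `c(G - v)` with respect to `c'`. -/
theorem tot_leaf [Fintype V] (G : SimpleGraph V)
    (c1 c0 : V → ℚ) (ce : Sym2 V → ℚ) (v u : V)
    (huv : G.Adj v u) (hleaf : ∀ w, G.Adj v w → w = u) :
    tot G c1 c0 ce univ =
      tot G (Function.update c1 u (c1 u * c0 v))
        (Function.update c0 u (c0 u * (c1 v + c0 v * ce s(u, v)))) ce
        ({v} : Finset V)ᶜ := by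
  have hv : v ∉ ({v} : Finset V)ᶜ := by simp
  have hu : u ∈ ({v} : Finset V)ᶜ := by simpa using huv.ne'
  rw [← insert_compl_self v, tot_insert hv, tot]
  refine sum_congr rfl fun S hS => ?_
  have hvS : v ∉ S := fun h => hv ((mem_indepOn.mp hS).1 h)
  rw [wt_insert_insert hv hvS, wt_insert_of_leaf huv hleaf hu hv hvS,
    if_congr (forall_not_adj_iff_of_leaf huv hleaf S) rfl rfl]
  by_cases huS : u ∈ S
  · rw [wt_update_c1_of_mem huS, wt_update_c0_of_notMem (fun h => (mem_sdiff.mp h).2 huS)]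
    simp [huS]
  · rw [wt_update_c1_of_notMem huS, wt_update_c0_of_mem (mem_sdiff.mpr ⟨hu, huS⟩)]
    simp only [huS, if_false, not_false_eq_true, if_true]
    ring
end
end

section
/- (Correctness of PROP with eta = 1.) Let G be a finite simple graph with cardinality function c and let v be a vertex of G. Define a cardinality function c' on G - N[v] that agrees with c everywhere except c'_0(w) = c0(w) * prod_{u in N(v), uw in E(G)} c0(uw) for every vertex w not in N[v]. Then c(G, v^1) = c1(v) * (prod_{u in N(v)} c0(u)) * (prod_{e in E(G), both endpoints of e in N(v)} c0(e)) * c'(G - N[v]), where c'(G - N[v]) is the weighted sum over independent sets of G - N[v] with respect to c'. -/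
open Finset

noncomputable section
open scoped Classical

variable {V : Type*}

-- key lemma
lemma wt_insert [Fintype V] (G : SimpleGraph V)
    (c1 c0 : V → ℚ) (ce : Sym2 V → ℚ) (v : V) (T : Finset V)
    (hT : T ⊆ (insert v (G.neighborFinset v))ᶜ) :
    wt G c1 c0 ce univ (insert v T) =
      c1 v * (∏ u ∈ G.neighborFinset v, c0 u) *
        (∏ e ∈ G.edgeFinset.filter (fun e => ∀ x ∈ e, x ∈ G.neighborFinset v), ce e) *
        wt G c1
          (fun w => c0 w * ∏ u ∈ (G.neighborFinset v).filter (fun u => G.Adj u w), ce s(u, w))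
          ce (insert v (G.neighborFinset v))ᶜ T := by
  classical
  set N := G.neighborFinset v with hN
  set W : Finset V := (insert v N)ᶜ with hW
  have hmemW : ∀ x, x ∈ W ↔ x ≠ v ∧ ¬ G.Adj v x := by
    intro x
    simp [hW, hN, mem_compl, mem_insert]
  have hvN : v ∉ N := by simp [hN]
  have hvW : v ∉ W := by simp [hmemW]
  have hNW : ∀ x, x ∈ N → x ∉ W := by
    intro x hx hxW
    exact (hmemW x).1 hxW |>.2 (by simpa [hN] using hx)
  have hvT : v ∉ T := fun h => hvW (hT h)
  have hTN : ∀ x, x ∈ T → x ∉ N := fun x hx => fun hn => hNW x hn (hT hx)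
  -- vertex products
  have h1 : ∏ x ∈ insert v T, c1 x = c1 v * ∏ x ∈ T, c1 x := prod_insert hvT
  have hset : univ \ insert v T = N ∪ (W \ T) := by
    ext x
    simp only [mem_sdiff, mem_univ, true_and, mem_insert, mem_union, mem_sdiff]
    constructor
    · rintro h
      push_neg at h
      by_cases hx : x ∈ N
      · exact Or.inl hx
      · refine Or.inr ⟨?_, h.2⟩
        rw [hmemW]
        exact ⟨h.1, by simpa [hN] using hx⟩
    · rintro (h | h) <;> rintro (rfl | he)
      · exact hvN h
      · exact hTN _ he h
      · exact hvW h.1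
      · exact h.2 he
  have h2 : ∏ x ∈ univ \ insert v T, c0 x = (∏ x ∈ N, c0 x) * ∏ x ∈ W \ T, c0 x := by
    rw [hset, prod_union]
    exact disjoint_left.2 fun x hx hx' => hNW x hx (mem_sdiff.1 hx').1
  -- edge products
  set P : Sym2 V → Prop := fun e => (∀ x ∈ e, x ∈ (univ : Finset V)) ∧ ∀ x ∈ e, x ∉ insert v T
    with hP
  set q1 : Sym2 V → Prop := fun e => ∀ x ∈ e, x ∈ N with hq1
  set q2 : Sym2 V → Prop := fun e => ∀ x ∈ e, x ∈ W with hq2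
  have split1 : ∏ e ∈ G.edgeFinset.filter P, ce e =
      (∏ e ∈ (G.edgeFinset.filter P).filter q1, ce e) *
        ∏ e ∈ (G.edgeFinset.filter P).filter (fun e => ¬ q1 e), ce e :=
    (prod_filter_mul_prod_filter_not _ _ _).symm
  have split2 : ∏ e ∈ (G.edgeFinset.filter P).filter (fun e => ¬ q1 e), ce e =
      (∏ e ∈ ((G.edgeFinset.filter P).filter (fun e => ¬ q1 e)).filter q2, ce e) *
        ∏ e ∈ ((G.edgeFinset.filter P).filter (fun e => ¬ q1 e)).filter (fun e => ¬ q2 e), ce e :=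
    (prod_filter_mul_prod_filter_not _ _ _).symm
  -- part 1 : edges inside N
  have e1 : (G.edgeFinset.filter P).filter q1 = G.edgeFinset.filter q1 := by
    ext e
    simp only [mem_filter, and_assoc]
    constructor
    · tauto
    · rintro ⟨he, hq⟩
      refine ⟨he, ⟨fun x _ => mem_univ x, fun x hx hxi => ?_⟩, hq⟩
      have hxN := hq x hx
      rcases mem_insert.1 hxi with rfl | hxT
      · exact hvN hxN
      · exact hTN x hxT hxN
  -- part 2 : edges inside W avoiding T
  have e2 : ((G.edgeFinset.filter P).filter (fun e => ¬ q1 e)).filter q2 =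
      G.edgeFinset.filter (fun e => (∀ x ∈ e, x ∈ W) ∧ ∀ x ∈ e, x ∉ T) := by
    ext e
    simp only [mem_filter, and_assoc]
    constructor
    · rintro ⟨he, ⟨-, hPe⟩, -, hq⟩
      exact ⟨he, hq, fun x hx hxT => hPe x hx (mem_insert_of_mem hxT)⟩
    · rintro ⟨he, hq, hTx⟩
      refine ⟨he, ⟨fun x _ => mem_univ x, fun x hx hxi => ?_⟩, fun h => ?_, hq⟩
      · rcases mem_insert.1 hxi with rfl | hxT
        · exact hvW (hq x hx)
        · exact hTx x hx hxT
      · induction e with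
        | h a b =>
          have := hNW a (h a (Sym2.mem_mk_left a b)) (hq a (Sym2.mem_mk_left a b))
          exact this
  -- part 3 : mixed edges
  have e3 : ∏ e ∈ ((G.edgeFinset.filter P).filter (fun e => ¬ q1 e)).filter (fun e => ¬ q2 e),
      ce e = ∏ w ∈ W \ T, ∏ u ∈ N.filter (fun u => G.Adj u w), ce s(u, w) := by
    rw [prod_sigma']
    refine (prod_bij (fun p _ => s(p.2, p.1)) ?_ ?_ ?_ ?_).symm
    · rintro ⟨w, u⟩ hp
      simp only [mem_sigma, mem_sdiff, mem_filter] at hp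
      obtain ⟨⟨hwW, hwT⟩, huN, hadj⟩ := hp
      have huT : u ∉ T := fun h => hNW u huN (hT h)
      simp only [mem_filter, SimpleGraph.mem_edgeFinset, SimpleGraph.mem_edgeSet]
      refine ⟨⟨⟨hadj, fun x _ => mem_univ x, ?_⟩, fun h => ?_⟩, fun h => ?_⟩
      · intro x hx hxi
        rcases Sym2.mem_iff.1 hx with rfl | rfl
        · rcases mem_insert.1 hxi with rfl | hxT
          · exact hvN huN
          · exact huT hxT
        · rcases mem_insert.1 hxi with rfl | hxT
          · exact hvW hwW
          · exact hwT hxT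
      · exact hNW w (h w (Sym2.mem_mk_right u w)) hwW
      · exact hNW u huN (h u (Sym2.mem_mk_left u w))
    · rintro ⟨w, u⟩ hp ⟨w', u'⟩ hp' heq
      simp only [mem_sigma, mem_sdiff, mem_filter] at hp hp'
      simp only [Sym2.eq_iff] at heq
      rcases heq with ⟨h1, h2⟩ | ⟨h1, h2⟩
      · obtain rfl : u = u' := h1
        obtain rfl : w = w' := h2
        rfl
      · obtain rfl : u = w' := h1
        obtain rfl : w = u' := h2
        exact (hNW w hp'.2.1 hp.1.1).elim
    · intro e he
      simp only [mem_filter, SimpleGraph.mem_edgeFinset, SimpleGraph.mem_edgeSet] at he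
      obtain ⟨⟨⟨hadj, -, hPe⟩, hq1e⟩, hq2e⟩ := he
      induction e with
      | h a b =>
        have haT : a ∉ insert v T := hPe a (Sym2.mem_mk_left a b)
        have hbT : b ∉ insert v T := hPe b (Sym2.mem_mk_right a b)
        have hav : a ≠ v := fun h => haT (h ▸ mem_insert_self v T)
        have hbv : b ≠ v := fun h => hbT (h ▸ mem_insert_self v T)
        have haT' : a ∉ T := fun h => haT (mem_insert_of_mem h)
        have hbT' : b ∉ T := fun h => hbT (mem_insert_of_mem h)
        have hadjab : G.Adj a b := hadj
        by_cases haN : a ∈ N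
        · have hbN : b ∉ N := by
            intro hbN
            exact hq1e (fun x hx => by rcases Sym2.mem_iff.1 hx with rfl | rfl <;> assumption)
          have hbW : b ∈ W := (hmemW b).2 ⟨hbv, by simpa [hN] using hbN⟩
          refine ⟨⟨b, a⟩, ?_, rfl⟩
          simp only [mem_sigma, mem_sdiff, mem_filter]
          exact ⟨⟨hbW, hbT'⟩, haN, hadjab⟩
        · have haW : a ∈ W := (hmemW a).2 ⟨hav, by simpa [hN] using haN⟩
          have hbN : b ∈ N := by
            by_contra hbN
            have hbW : b ∈ W := (hmemW b).2 ⟨hbv, by simpa [hN] using hbN⟩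
            exact hq2e (fun x hx => by rcases Sym2.mem_iff.1 hx with rfl | rfl <;> assumption)
          refine ⟨⟨a, b⟩, ?_, Sym2.eq_swap⟩
          simp only [mem_sigma, mem_sdiff, mem_filter]
          exact ⟨⟨haW, haT'⟩, hbN, hadjab.symm⟩
    · intro p hp
      rfl
  -- assemble
  have hrhs : ∏ w ∈ W \ T,
      (c0 w * ∏ u ∈ N.filter (fun u => G.Adj u w), ce s(u, w)) =
      (∏ w ∈ W \ T, c0 w) * ∏ w ∈ W \ T, ∏ u ∈ N.filter (fun u => G.Adj u w), ce s(u, w) :=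
    prod_mul_distrib
  rw [wt, wt, h1, h2, split1, split2, e1, e2, e3, hrhs]
  ring

/-- Correctness of PROP with η = 1:
`c(G, v^1) = c1(v) * (∏_{u ∈ N(v)} c0(u)) * (∏_{e ⊆ N(v)} c0(e)) * c'(G - N[v])`,
where `c'` agrees with `c` except `c'_0(w) = c0(w) * ∏_{u ∈ N(v), uw ∈ E(G)} c0(uw)`
for every vertex `w ∉ N[v]`. -/
theorem totC_true_eq [Fintype V] (G : SimpleGraph V)
    (c1 c0 : V → ℚ) (ce : Sym2 V → ℚ) (v : V) :
    totC G c1 c0 ce univ v true =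
      c1 v * (∏ u ∈ G.neighborFinset v, c0 u) *
        (∏ e ∈ G.edgeFinset.filter (fun e => ∀ x ∈ e, x ∈ G.neighborFinset v), ce e) *
        tot G c1
          (fun w => c0 w * ∏ u ∈ (G.neighborFinset v).filter (fun u => G.Adj u w), ce s(u, w))
          ce (insert v (G.neighborFinset v))ᶜ := by
  classical
  set N := G.neighborFinset v with hN
  set W : Finset V := (insert v N)ᶜ with hW
  have hmemW : ∀ x, x ∈ W ↔ x ≠ v ∧ ¬ G.Adj v x := by
    intro x; simp [hW, hN, mem_compl, mem_insert]
  have hvW : v ∉ W := by simp [hmemW]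
  rw [totC, tot, mul_sum]
  refine Finset.sum_nbij' (fun S => S.erase v) (fun T => insert v T) ?_ ?_ ?_ ?_ ?_
  · intro S hS
    simp only [mem_filter, indepOn, mem_univ, true_and] at hS ⊢
    obtain ⟨⟨-, hind⟩, hvS⟩ := hS
    have hvS : v ∈ S := hvS.2 trivial
    refine ⟨fun x hx => ?_, fun a ha b hb => hind a (mem_of_mem_erase ha) b (mem_of_mem_erase hb)⟩
    rw [hmemW]
    exact ⟨ne_of_mem_erase hx, hind v hvS x (mem_of_mem_erase hx)⟩
  · intro T hT
    simp only [mem_filter, indepOn, mem_univ, true_and] at hT ⊢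
    obtain ⟨hTW, hind⟩ := hT
    have hadj : ∀ x ∈ T, ¬ G.Adj v x := fun x hx => ((hmemW x).1 (hTW hx)).2
    refine ⟨⟨subset_univ _, fun a ha b hb h => ?_⟩,
      iff_of_true (mem_insert_self v T) trivial⟩
    rcases mem_insert.1 ha with hA | hA <;> rcases mem_insert.1 hb with hB | hB
    · exact G.irrefl (show G.Adj v v by rw [hA, hB] at h; exact h)
    · exact hadj b hB (show G.Adj v b by rw [← hA]; exact h)
    · exact hadj a hA (show G.Adj v a by rw [← hB]; exact h.symm)
    · exact hind a hA b hB h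
  · intro S hS
    simp only [mem_filter] at hS
    exact insert_erase (hS.2.2 trivial)
  · intro T hT
    simp only [indepOn, mem_filter, mem_univ, true_and] at hT
    exact erase_insert (fun h => hvW (hT.1 h))
  · intro S hS
    simp only [mem_filter, indepOn, mem_univ, true_and] at hS
    have hvS : v ∈ S := hS.2.2 trivial
    have hsub : S.erase v ⊆ W := by
      intro x hx
      rw [hmemW]
      exact ⟨ne_of_mem_erase hx, hS.1.2 v hvS x (mem_of_mem_erase hx)⟩
    conv_lhs => rw [← insert_erase hvS]
    exact wt_insert G c1 c0 ce v (S.erase v) hsub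
end
end

section
/- (Correctness of reduction D1, cut-vertex decomposition.) Let G be a finite simple graph with cardinality function c whose vertex set satisfies V(G) = V1 ∪ V2 with V1 ∩ V2 = {v}, such that every edge of G has both endpoints in V1 or both endpoints in V2. Let G1 = G[V1] and G2 = G[V2] with restricted weights. Then for each eta in {0,1}: c_eta(v) * c(G, v^eta) = c(G1, v^eta) * c(G2, v^eta), where c_0(v) = c0(v) and c_1(v) = c1(v). -/
open Finset

noncomputable section
open scoped Classical

variable {V : Type*}

lemma wt_cut [Fintype V] (G : SimpleGraph V)
    (c1 c0 : V → ℚ) (ce : Sym2 V → ℚ) (V1 V2 : Finset V) (v : V)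
    (hcover : V1 ∪ V2 = univ) (hmeet : V1 ∩ V2 = {v})
    (hsep : ∀ a b, G.Adj a b → (a ∈ V1 ∧ b ∈ V1) ∨ (a ∈ V2 ∧ b ∈ V2))
    (η : Bool) (S : Finset V) (hvS : v ∈ S ↔ η = true) :
    (cond η (c1 v) (c0 v)) * wt G c1 c0 ce univ S =
      wt G c1 c0 ce V1 (S ∩ V1) * wt G c1 c0 ce V2 (S ∩ V2) := by
  have hvmem : v ∈ V1 ∩ V2 := by rw [hmeet]; exact mem_singleton_self v
  have hv1 : v ∈ V1 := (mem_inter.mp hvmem).1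
  have hv2 : v ∈ V2 := (mem_inter.mp hvmem).2
  -- c1 part
  have h1 : (∏ x ∈ S ∩ V1, c1 x) * ∏ x ∈ S ∩ V2, c1 x
      = (cond η (c1 v) 1) * ∏ x ∈ S, c1 x := by
    rw [← prod_union_inter]
    have hu : (S ∩ V1) ∪ (S ∩ V2) = S := by
      rw [← inter_union_distrib_left, hcover, inter_univ]
    have hi : (S ∩ V1) ∩ (S ∩ V2) = S ∩ {v} := by
      rw [inter_inter_inter_comm, inter_self, hmeet]
    rw [hu, hi]
    cases η with
    | true =>
        have hvs : v ∈ S := hvS.mpr rfl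
        have : S ∩ {v} = {v} := inter_eq_right.mpr (by simp [hvs])
        simp [this, mul_comm]
    | false =>
        have : S ∩ {v} = ∅ := by
          apply eq_empty_of_forall_notMem
          intro x hx
          rcases mem_inter.mp hx with ⟨hxS, hxv⟩
          rw [mem_singleton] at hxv; subst hxv
          exact absurd (hvS.mp hxS) (by simp)
        simp [this]
  -- c0 part
  have h0 : (∏ x ∈ V1 \ (S ∩ V1), c0 x) * ∏ x ∈ V2 \ (S ∩ V2), c0 x
      = (cond η 1 (c0 v)) * ∏ x ∈ univ \ S, c0 x := by
    have e1 : V1 \ (S ∩ V1) = V1 \ S := by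
      ext x; simp only [mem_sdiff, mem_inter]; tauto
    have e2 : V2 \ (S ∩ V2) = V2 \ S := by
      ext x; simp only [mem_sdiff, mem_inter]; tauto
    rw [e1, e2, ← prod_union_inter]
    have hu : (V1 \ S) ∪ (V2 \ S) = univ \ S := by
      rw [← union_sdiff_distrib, hcover]
    have hi : (V1 \ S) ∩ (V2 \ S) = {v} \ S := by
      have : (V1 \ S) ∩ (V2 \ S) = (V1 ∩ V2) \ S := by
        ext x; simp only [mem_sdiff, mem_inter]; tauto
      rw [this, hmeet]
    rw [hu, hi]
    cases η with
    | true =>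
        have hvs : v ∈ S := hvS.mpr rfl
        have : ({v} : Finset V) \ S = ∅ := by
          apply eq_empty_of_forall_notMem
          intro x hx
          rcases mem_sdiff.mp hx with ⟨hxv, hxS⟩
          rw [mem_singleton] at hxv; subst hxv; exact hxS hvs
        simp [this]
    | false =>
        have hvs : v ∉ S := fun h => by simpa using hvS.mp h
        have : ({v} : Finset V) \ S = {v} := by
          ext x; simp only [mem_sdiff, mem_singleton]
          constructor
          · tauto
          · rintro rfl; exact ⟨rfl, hvs⟩
        simp [this, mul_comm]
  -- edge part
  have hE1 : G.edgeFinset.filter (fun e => (∀ x ∈ e, x ∈ V1) ∧ ∀ x ∈ e, x ∉ S ∩ V1)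
      = G.edgeFinset.filter (fun e => (∀ x ∈ e, x ∈ V1) ∧ ∀ x ∈ e, x ∉ S) := by
    apply filter_congr
    intro e _
    constructor
    · rintro ⟨ha, hb⟩
      exact ⟨ha, fun x hx hxS => hb x hx (mem_inter.mpr ⟨hxS, ha x hx⟩)⟩
    · rintro ⟨ha, hb⟩
      exact ⟨ha, fun x hx hxS => hb x hx (mem_inter.mp hxS).1⟩
  have hE2 : G.edgeFinset.filter (fun e => (∀ x ∈ e, x ∈ V2) ∧ ∀ x ∈ e, x ∉ S ∩ V2)
      = G.edgeFinset.filter (fun e => (∀ x ∈ e, x ∈ V2) ∧ ∀ x ∈ e, x ∉ S) := by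
    apply filter_congr
    intro e _
    constructor
    · rintro ⟨ha, hb⟩
      exact ⟨ha, fun x hx hxS => hb x hx (mem_inter.mpr ⟨hxS, ha x hx⟩)⟩
    · rintro ⟨ha, hb⟩
      exact ⟨ha, fun x hx hxS => hb x hx (mem_inter.mp hxS).1⟩
  have hdisj : Disjoint
      (G.edgeFinset.filter (fun e => (∀ x ∈ e, x ∈ V1) ∧ ∀ x ∈ e, x ∉ S))
      (G.edgeFinset.filter (fun e => (∀ x ∈ e, x ∈ V2) ∧ ∀ x ∈ e, x ∉ S)) := by
    rw [disjoint_left]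
    intro e he1 he2
    rcases mem_filter.mp he1 with ⟨heE, h1V, -⟩
    rcases mem_filter.mp he2 with ⟨-, h2V, -⟩
    revert heE h1V h2V
    induction e using Sym2.ind with
    | _ a b =>
      intro heE h1V h2V
      have hadj : G.Adj a b := by
        rw [SimpleGraph.mem_edgeFinset, SimpleGraph.mem_edgeSet] at heE
        exact heE
      have haV : a ∈ V1 ∩ V2 :=
        mem_inter.mpr ⟨h1V a (by simp), h2V a (by simp)⟩
      have hbV : b ∈ V1 ∩ V2 :=
        mem_inter.mpr ⟨h1V b (by simp), h2V b (by simp)⟩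
      rw [hmeet, mem_singleton] at haV hbV
      subst haV; subst hbV
      exact G.irrefl hadj
  have hEu : G.edgeFinset.filter (fun e => (∀ x ∈ e, x ∈ V1) ∧ ∀ x ∈ e, x ∉ S)
      ∪ G.edgeFinset.filter (fun e => (∀ x ∈ e, x ∈ V2) ∧ ∀ x ∈ e, x ∉ S)
      = G.edgeFinset.filter (fun e => (∀ x ∈ e, x ∈ (univ : Finset V)) ∧ ∀ x ∈ e, x ∉ S) := by
    rw [← filter_or]
    apply filter_congr
    intro e he
    revert he
    induction e using Sym2.ind with
    | _ a b =>
      intro he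
      have hadj : G.Adj a b := by
        rw [SimpleGraph.mem_edgeFinset, SimpleGraph.mem_edgeSet] at he
        exact he
      constructor
      · rintro (⟨-, hb⟩ | ⟨-, hb⟩) <;> exact ⟨fun x _ => mem_univ x, hb⟩
      · rintro ⟨-, hb⟩
        rcases hsep a b hadj with ⟨ha1, hb1⟩ | ⟨ha2, hb2⟩
        · left
          refine ⟨?_, hb⟩
          intro x hx
          rcases Sym2.mem_iff.mp hx with rfl | rfl <;> assumption
        · right
          refine ⟨?_, hb⟩
          intro x hx
          rcases Sym2.mem_iff.mp hx with rfl | rfl <;> assumption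
  have hE : (∏ e ∈ G.edgeFinset.filter
        (fun e => (∀ x ∈ e, x ∈ V1) ∧ ∀ x ∈ e, x ∉ S ∩ V1), ce e)
      * ∏ e ∈ G.edgeFinset.filter
        (fun e => (∀ x ∈ e, x ∈ V2) ∧ ∀ x ∈ e, x ∉ S ∩ V2), ce e
      = ∏ e ∈ G.edgeFinset.filter
        (fun e => (∀ x ∈ e, x ∈ (univ : Finset V)) ∧ ∀ x ∈ e, x ∉ S), ce e := by
    rw [hE1, hE2, ← prod_union hdisj, hEu]
  simp only [wt]
  have reorder : ∀ a₁ b₁ d₁ a₂ b₂ d₂ : ℚ,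
      a₁ * b₁ * d₁ * (a₂ * b₂ * d₂) = a₁ * a₂ * (b₁ * b₂) * (d₁ * d₂) := by
    intros; ring
  rw [reorder, h1, h0, hE]
  cases η <;> simp <;> ring


/-- Correctness of reduction D1, cut-vertex decomposition:
if `V(G) = V1 ∪ V2`, `V1 ∩ V2 = {v}` and every edge of `G` lies within `V1`
or within `V2`, then for each `η ∈ {0,1}`:
`c_η(v) * c(G, v^η) = c(G[V1], v^η) * c(G[V2], v^η)`. -/
theorem totC_cut_vertex [Fintype V] (G : SimpleGraph V)
    (c1 c0 : V → ℚ) (ce : Sym2 V → ℚ) (V1 V2 : Finset V) (v : V)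
    (hcover : V1 ∪ V2 = univ) (hmeet : V1 ∩ V2 = {v})
    (hsep : ∀ a b, G.Adj a b → (a ∈ V1 ∧ b ∈ V1) ∨ (a ∈ V2 ∧ b ∈ V2))
    (η : Bool) :
    (cond η (c1 v) (c0 v)) * totC G c1 c0 ce univ v η =
      totC G c1 c0 ce V1 v η * totC G c1 c0 ce V2 v η := by
  have hvmem : v ∈ V1 ∩ V2 := by rw [hmeet]; exact mem_singleton_self v
  have hv1 : v ∈ V1 := (mem_inter.mp hvmem).1
  have hv2 : v ∈ V2 := (mem_inter.mp hvmem).2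
  simp only [totC]
  rw [mul_sum, sum_mul_sum]
  rw [← Finset.sum_product']
  apply Finset.sum_nbij' (fun S => (S ∩ V1, S ∩ V2)) (fun p => p.1 ∪ p.2)
  · -- hi
    intro S hS
    rcases mem_filter.mp hS with ⟨hS', hvS⟩
    rcases mem_filter.mp (mem_filter.mp hS).1 with ⟨-, -, hind⟩
    rw [mem_product]
    constructor
    · apply mem_filter.mpr
      refine ⟨mem_filter.mpr ⟨mem_univ _, inter_subset_right, ?_⟩, ?_⟩
      · intro u hu w hw
        exact hind u (mem_inter.mp hu).1 w (mem_inter.mp hw).1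
      · simp only [mem_inter]
        constructor
        · rintro ⟨h, -⟩; exact hvS.mp h
        · intro h; exact ⟨hvS.mpr h, hv1⟩
    · apply mem_filter.mpr
      refine ⟨mem_filter.mpr ⟨mem_univ _, inter_subset_right, ?_⟩, ?_⟩
      · intro u hu w hw
        exact hind u (mem_inter.mp hu).1 w (mem_inter.mp hw).1
      · simp only [mem_inter]
        constructor
        · rintro ⟨h, -⟩; exact hvS.mp h
        · intro h; exact ⟨hvS.mpr h, hv2⟩
  · -- hj
    intro p hp
    rw [mem_product] at hp
    rcases mem_filter.mp hp.1 with ⟨h1', hv1S⟩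
    rcases mem_filter.mp h1' with ⟨-, hsub1, hind1⟩
    rcases mem_filter.mp hp.2 with ⟨h2', hv2S⟩
    rcases mem_filter.mp h2' with ⟨-, hsub2, hind2⟩
    have mem1 : ∀ x ∈ p.1 ∪ p.2, x ∈ V1 → x ∈ p.1 := by
      intro x hx hxV1
      rcases mem_union.mp hx with h | h
      · exact h
      · have : x ∈ V1 ∩ V2 := mem_inter.mpr ⟨hxV1, hsub2 h⟩
        rw [hmeet, mem_singleton] at this; subst this
        exact hv1S.mpr (hv2S.mp h)
    have mem2 : ∀ x ∈ p.1 ∪ p.2, x ∈ V2 → x ∈ p.2 := by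
      intro x hx hxV2
      rcases mem_union.mp hx with h | h
      · have : x ∈ V1 ∩ V2 := mem_inter.mpr ⟨hsub1 h, hxV2⟩
        rw [hmeet, mem_singleton] at this; subst this
        exact hv2S.mpr (hv1S.mp h)
      · exact h
    apply mem_filter.mpr
    refine ⟨mem_filter.mpr ⟨mem_univ _, fun x _ => mem_univ x, ?_⟩, ?_⟩
    · intro u hu w hw hadj
      rcases hsep u w hadj with ⟨huV, hwV⟩ | ⟨huV, hwV⟩
      · exact hind1 u (mem1 u hu huV) w (mem1 w hw hwV) hadj
      · exact hind2 u (mem2 u hu huV) w (mem2 w hw hwV) hadj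
    · rw [mem_union]
      constructor
      · rintro (h | h)
        · exact hv1S.mp h
        · exact hv2S.mp h
      · intro h; exact Or.inl (hv1S.mpr h)
  · -- left_inv
    intro S hS
    rcases mem_filter.mp (mem_filter.mp hS).1 with ⟨-, -, -⟩
    simp only
    rw [← inter_union_distrib_left, hcover, inter_univ]
  · -- right_inv
    intro p hp
    rw [mem_product] at hp
    rcases mem_filter.mp hp.1 with ⟨h1', hv1S⟩
    rcases mem_filter.mp h1' with ⟨-, hsub1, -⟩
    rcases mem_filter.mp hp.2 with ⟨h2', hv2S⟩
    rcases mem_filter.mp h2' with ⟨-, hsub2, -⟩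
    have k1 : (p.1 ∪ p.2) ∩ V1 = p.1 := by
      apply Finset.Subset.antisymm
      · intro x hx
        rcases mem_inter.mp hx with ⟨hxu, hxV1⟩
        rcases mem_union.mp hxu with h | h
        · exact h
        · have : x ∈ V1 ∩ V2 := mem_inter.mpr ⟨hxV1, hsub2 h⟩
          rw [hmeet, mem_singleton] at this; subst this
          exact hv1S.mpr (hv2S.mp h)
      · intro x hx
        exact mem_inter.mpr ⟨mem_union_left _ hx, hsub1 hx⟩
    have k2 : (p.1 ∪ p.2) ∩ V2 = p.2 := by
      apply Finset.Subset.antisymm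
      · intro x hx
        rcases mem_inter.mp hx with ⟨hxu, hxV2⟩
        rcases mem_union.mp hxu with h | h
        · have : x ∈ V1 ∩ V2 := mem_inter.mpr ⟨hsub1 h, hxV2⟩
          rw [hmeet, mem_singleton] at this; subst this
          exact hv2S.mpr (hv1S.mp h)
        · exact h
      · intro x hx
        exact mem_inter.mpr ⟨mem_union_right _ hx, hsub2 hx⟩
    simp only [k1, k2]
  · -- weights
    intro S hS
    rcases mem_filter.mp hS with ⟨-, hvS⟩
    exact wt_cut G c1 c0 ce V1 V2 v hcover hmeet hsep η S hvS
end
end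

section
/- (Two-vertex cut decomposition underlying reduction D2.) Let G be a finite simple graph with cardinality function c whose vertex set satisfies V(G) = V1 ∪ V2 with V1 ∩ V2 = {u, v}, where u and v are non-adjacent in G and every edge of G has both endpoints in V1 or both endpoints in V2. Let G1 = G[V1] and G2 = G[V2] with restricted weights. Then for all zeta, eta in {0,1}: c_zeta(u) * c_eta(v) * c(G, u^zeta, v^eta) = c(G1, u^zeta, v^eta) * c(G2, u^zeta, v^eta), where c_0(x) = c0(x) and c_1(x) = c1(x). -/
open Finset

noncomputable section
open scoped Classical

variable {V : Type*}

/-- Two-vertex cut decomposition underlying reduction D2: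
if `V(G) = V1 ∪ V2`, `V1 ∩ V2 = {u, v}` with `u ≠ v` non-adjacent, and every edge
of `G` lies within `V1` or within `V2`, then for all `ζ, η ∈ {0,1}`:
`c_ζ(u) * c_η(v) * c(G, u^ζ, v^η) = c(G[V1], u^ζ, v^η) * c(G[V2], u^ζ, v^η)`. -/
theorem totC2_cut_pair [Fintype V] (G : SimpleGraph V)
    (c1 c0 : V → ℚ) (ce : Sym2 V → ℚ) (V1 V2 : Finset V) (u v : V)
    (hne : u ≠ v) (hnadj : ¬ G.Adj u v)
    (hcover : V1 ∪ V2 = univ) (hmeet : V1 ∩ V2 = {u, v})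
    (hsep : ∀ a b, G.Adj a b → (a ∈ V1 ∧ b ∈ V1) ∨ (a ∈ V2 ∧ b ∈ V2))
    (ζ η : Bool) :
    (cond ζ (c1 u) (c0 u)) * (cond η (c1 v) (c0 v)) * totC2 G c1 c0 ce univ u v ζ η =
      totC2 G c1 c0 ce V1 u v ζ η * totC2 G c1 c0 ce V2 u v ζ η := by
  classical
  have hu12 : u ∈ V1 ∩ V2 := by rw [hmeet]; exact mem_insert_self _ _
  have hv12 : v ∈ V1 ∩ V2 := by rw [hmeet]; exact mem_insert_of_mem (mem_singleton_self _)
  have hu1 : u ∈ V1 := (mem_inter.1 hu12).1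
  have hu2 : u ∈ V2 := (mem_inter.1 hu12).2
  have hv1 : v ∈ V1 := (mem_inter.1 hv12).1
  have hv2 : v ∈ V2 := (mem_inter.1 hv12).2
  have hVcov : ∀ x : V, x ∈ V1 ∨ x ∈ V2 := fun x => by
    have : x ∈ V1 ∪ V2 := by rw [hcover]; exact mem_univ x
    exact mem_union.1 this
  have hmeet' : ∀ x : V, x ∈ V1 → x ∈ V2 → x = u ∨ x = v := fun x h1 h2 => by
    have : x ∈ V1 ∩ V2 := mem_inter.2 ⟨h1, h2⟩
    rw [hmeet] at this
    simpa using this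
  -- edges lie entirely in V1 or in V2
  have hedge : ∀ e ∈ G.edgeFinset, (∀ x ∈ e, x ∈ V1) ∨ ∀ x ∈ e, x ∈ V2 := by
    intro e he
    induction e using Sym2.ind with
    | _ a b =>
      have hadj : G.Adj a b := by
        rw [SimpleGraph.mem_edgeFinset, SimpleGraph.mem_edgeSet] at he; exact he
      rcases hsep a b hadj with ⟨h1, h2⟩ | ⟨h1, h2⟩
      · left; intro x hx; rcases Sym2.mem_iff.1 hx with rfl | rfl <;> assumption
      · right; intro x hx; rcases Sym2.mem_iff.1 hx with rfl | rfl <;> assumption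
  have hnotboth : ∀ e ∈ G.edgeFinset, ¬ ((∀ x ∈ e, x ∈ V1) ∧ ∀ x ∈ e, x ∈ V2) := by
    intro e he
    induction e using Sym2.ind with
    | _ a b =>
      have hadj : G.Adj a b := by
        rw [SimpleGraph.mem_edgeFinset, SimpleGraph.mem_edgeSet] at he; exact he
      rintro ⟨h1, h2⟩
      have hab : a ≠ b := G.ne_of_adj hadj
      have ha := hmeet' a (h1 a (Sym2.mem_mk_left a b)) (h2 a (Sym2.mem_mk_left a b))
      have hb := hmeet' b (h1 b (Sym2.mem_mk_right a b)) (h2 b (Sym2.mem_mk_right a b))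
      rcases ha with rfl | rfl <;> rcases hb with rfl | rfl
      · exact hab rfl
      · exact hnadj hadj
      · exact hnadj hadj.symm
      · exact hab rfl
  unfold totC2
  rw [Finset.sum_mul_sum, Finset.mul_sum, ← Finset.sum_product']
  refine Finset.sum_nbij' (fun S => (S ∩ V1, S ∩ V2)) (fun p => p.1 ∪ p.2) ?_ ?_ ?_ ?_ ?_
  · -- forward membership
    intro S hS
    simp only [indepOn, mem_filter, mem_univ, true_and, Finset.mem_product] at hS ⊢
    obtain ⟨⟨-, hind⟩, hSu, hSv⟩ := hS
    refine ⟨⟨⟨inter_subset_right, fun a ha b hb => hind a (mem_inter.1 ha).1 b (mem_inter.1 hb).1⟩,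
      ?_, ?_⟩, ⟨⟨inter_subset_right, fun a ha b hb => hind a (mem_inter.1 ha).1 b (mem_inter.1 hb).1⟩,
      ?_, ?_⟩⟩
    · rw [mem_inter]; constructor
      · rintro ⟨h, -⟩; exact hSu.1 h
      · intro h; exact ⟨hSu.2 h, hu1⟩
    · rw [mem_inter]; constructor
      · rintro ⟨h, -⟩; exact hSv.1 h
      · intro h; exact ⟨hSv.2 h, hv1⟩
    · rw [mem_inter]; constructor
      · rintro ⟨h, -⟩; exact hSu.1 h
      · intro h; exact ⟨hSu.2 h, hu2⟩
    · rw [mem_inter]; constructor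
      · rintro ⟨h, -⟩; exact hSv.1 h
      · intro h; exact ⟨hSv.2 h, hv2⟩
  · -- backward membership
    rintro ⟨S1, S2⟩ hp
    simp only [indepOn, mem_filter, mem_univ, true_and, Finset.mem_product] at hp ⊢
    obtain ⟨⟨⟨hsub1, hind1⟩, h1u, h1v⟩, ⟨⟨hsub2, hind2⟩, h2u, h2v⟩⟩ := hp
    have key1 : ∀ a, a ∈ S1 ∪ S2 → a ∈ V1 → a ∈ S1 := by
      intro a ha haV1
      rcases mem_union.1 ha with h | h
      · exact h
      · rcases hmeet' a haV1 (hsub2 h) with rfl | rfl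
        · exact h1u.2 (h2u.1 h)
        · exact h1v.2 (h2v.1 h)
    have key2 : ∀ a, a ∈ S1 ∪ S2 → a ∈ V2 → a ∈ S2 := by
      intro a ha haV2
      rcases mem_union.1 ha with h | h
      · rcases hmeet' a (hsub1 h) haV2 with rfl | rfl
        · exact h2u.2 (h1u.1 h)
        · exact h2v.2 (h1v.1 h)
      · exact h
    refine ⟨⟨subset_univ _, ?_⟩, ?_, ?_⟩
    · intro a ha b hb hab
      rcases hsep a b hab with ⟨ha1, hb1⟩ | ⟨ha2, hb2⟩
      · exact hind1 a (key1 a ha ha1) b (key1 b hb hb1) hab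
      · exact hind2 a (key2 a ha ha2) b (key2 b hb hb2) hab
    · rw [mem_union]; constructor
      · rintro (h | h)
        · exact h1u.1 h
        · exact h2u.1 h
      · intro h; exact Or.inl (h1u.2 h)
    · rw [mem_union]; constructor
      · rintro (h | h)
        · exact h1v.1 h
        · exact h2v.1 h
      · intro h; exact Or.inl (h1v.2 h)
  · -- left inverse
    intro S hS
    ext x
    simp only [mem_union, mem_inter]
    have := hVcov x
    tauto
  · -- right inverse
    rintro ⟨S1, S2⟩ hp
    simp only [indepOn, mem_filter, mem_univ, true_and, Finset.mem_product] at hp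
    obtain ⟨⟨⟨hsub1, hind1⟩, h1u, h1v⟩, ⟨⟨hsub2, hind2⟩, h2u, h2v⟩⟩ := hp
    have key1 : ∀ a, a ∈ S2 → a ∈ V1 → a ∈ S1 := by
      intro a h haV1
      rcases hmeet' a haV1 (hsub2 h) with rfl | rfl
      · exact h1u.2 (h2u.1 h)
      · exact h1v.2 (h2v.1 h)
    have key2 : ∀ a, a ∈ S1 → a ∈ V2 → a ∈ S2 := by
      intro a h haV2
      rcases hmeet' a (hsub1 h) haV2 with rfl | rfl
      · exact h2u.2 (h1u.1 h)
      · exact h2v.2 (h1v.1 h)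
    have e1 : (S1 ∪ S2) ∩ V1 = S1 := by
      ext x
      simp only [mem_inter, mem_union]
      constructor
      · rintro ⟨h | h, hV⟩
        · exact h
        · exact key1 x h hV
      · intro h; exact ⟨Or.inl h, hsub1 h⟩
    have e2 : (S1 ∪ S2) ∩ V2 = S2 := by
      ext x
      simp only [mem_inter, mem_union]
      constructor
      · rintro ⟨h | h, hV⟩
        · exact key2 x h hV
        · exact h
      · intro h; exact ⟨Or.inr h, hsub2 h⟩
    simp [e1, e2]
  · -- the weight identity
    intro S hS
    simp only [indepOn, mem_filter, mem_univ, true_and] at hS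
    obtain ⟨⟨-, hind⟩, hSu, hSv⟩ := hS
    -- notation for the pair {u, v}
    set P : Finset V := {u, v} with hP
    -- Step A: the constants
    have hk : cond ζ (c1 u) (c0 u) * cond η (c1 v) (c0 v) =
        (∏ x ∈ S ∩ P, c1 x) * ∏ x ∈ P \ S, c0 x := by
      have h1 : S ∩ P = P.filter (· ∈ S) := by
        ext x; simp only [mem_inter, mem_filter]; tauto
      have h2 : P \ S = P.filter (· ∉ S) := by
        ext x; simp only [mem_sdiff, mem_filter]
      rw [h1, h2, ← Finset.prod_ite (fun x => c1 x) (fun x => c0 x), hP,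
        Finset.prod_pair hne]
      cases ζ <;> cases η <;> simp [hSu, hSv]
    -- Step B: vertex products
    have hSunion : S ∩ V1 ∪ S ∩ V2 = S := by
      ext x
      simp only [mem_union, mem_inter]
      have := hVcov x
      tauto
    have hSinter : (S ∩ V1) ∩ (S ∩ V2) = S ∩ P := by
      rw [← hmeet]
      ext x
      simp only [mem_inter]
      tauto
    have hc1 := Finset.prod_union_inter (s₁ := S ∩ V1) (s₂ := S ∩ V2) (f := c1)
    rw [hSunion, hSinter] at hc1
    have hd1 : V1 \ (S ∩ V1) = V1 \ S := by
      ext x; simp only [mem_sdiff, mem_inter]; tauto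
    have hd2 : V2 \ (S ∩ V2) = V2 \ S := by
      ext x; simp only [mem_sdiff, mem_inter]; tauto
    have hdu : (V1 \ S) ∪ (V2 \ S) = univ \ S := by
      ext x
      simp only [mem_union, mem_sdiff, mem_univ, true_and]
      have := hVcov x
      tauto
    have hdi : (V1 \ S) ∩ (V2 \ S) = P \ S := by
      rw [← hmeet]
      ext x
      simp only [mem_inter, mem_sdiff]
      tauto
    have hc0 := Finset.prod_union_inter (s₁ := V1 \ S) (s₂ := V2 \ S) (f := c0)
    rw [hdu, hdi] at hc0
    -- Step C: edge products
    have hfilt1 : G.edgeFinset.filter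
          (fun e => (∀ x ∈ e, x ∈ V1) ∧ ∀ x ∈ e, x ∉ S ∩ V1) =
        G.edgeFinset.filter (fun e => (∀ x ∈ e, x ∈ V1) ∧ ∀ x ∈ e, x ∉ S) := by
      apply Finset.filter_congr
      intro e he
      constructor
      · rintro ⟨h1, h2⟩
        exact ⟨h1, fun x hx hxS => h2 x hx (mem_inter.2 ⟨hxS, h1 x hx⟩)⟩
      · rintro ⟨h1, h2⟩
        exact ⟨h1, fun x hx hxS => h2 x hx (mem_inter.1 hxS).1⟩
    have hfilt2 : G.edgeFinset.filter
          (fun e => (∀ x ∈ e, x ∈ V2) ∧ ∀ x ∈ e, x ∉ S ∩ V2) =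
        G.edgeFinset.filter (fun e => (∀ x ∈ e, x ∈ V2) ∧ ∀ x ∈ e, x ∉ S) := by
      apply Finset.filter_congr
      intro e he
      constructor
      · rintro ⟨h1, h2⟩
        exact ⟨h1, fun x hx hxS => h2 x hx (mem_inter.2 ⟨hxS, h1 x hx⟩)⟩
      · rintro ⟨h1, h2⟩
        exact ⟨h1, fun x hx hxS => h2 x hx (mem_inter.1 hxS).1⟩
    have hF0 : G.edgeFinset.filter
          (fun e => (∀ x ∈ e, x ∈ (univ : Finset V)) ∧ ∀ x ∈ e, x ∉ S) =
        G.edgeFinset.filter (fun e => (∀ x ∈ e, x ∈ V1) ∧ ∀ x ∈ e, x ∉ S) ∪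
        G.edgeFinset.filter (fun e => (∀ x ∈ e, x ∈ V2) ∧ ∀ x ∈ e, x ∉ S) := by
      ext e
      simp only [mem_union, mem_filter, mem_univ]
      constructor
      · rintro ⟨he, -, hs⟩
        rcases hedge e he with h | h
        · exact Or.inl ⟨he, h, hs⟩
        · exact Or.inr ⟨he, h, hs⟩
      · rintro (⟨he, -, hs⟩ | ⟨he, -, hs⟩) <;>
          exact ⟨he, fun x _ => trivial, hs⟩
    have hdisj : Disjoint
        (G.edgeFinset.filter (fun e => (∀ x ∈ e, x ∈ V1) ∧ ∀ x ∈ e, x ∉ S))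
        (G.edgeFinset.filter (fun e => (∀ x ∈ e, x ∈ V2) ∧ ∀ x ∈ e, x ∉ S)) := by
      rw [Finset.disjoint_left]
      intro e h1 h2
      rw [mem_filter] at h1 h2
      exact hnotboth e h1.1 ⟨h1.2.1, h2.2.1⟩
    have hE : ∏ e ∈ G.edgeFinset.filter
          (fun e => (∀ x ∈ e, x ∈ (univ : Finset V)) ∧ ∀ x ∈ e, x ∉ S), ce e =
        (∏ e ∈ G.edgeFinset.filter
          (fun e => (∀ x ∈ e, x ∈ V1) ∧ ∀ x ∈ e, x ∉ S), ce e) *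
        ∏ e ∈ G.edgeFinset.filter
          (fun e => (∀ x ∈ e, x ∈ V2) ∧ ∀ x ∈ e, x ∉ S), ce e := by
      rw [hF0, Finset.prod_union hdisj]
    -- assemble
    show cond ζ (c1 u) (c0 u) * cond η (c1 v) (c0 v) * wt G c1 c0 ce univ S =
      wt G c1 c0 ce V1 (S ∩ V1) * wt G c1 c0 ce V2 (S ∩ V2)
    rw [wt, wt, wt, hd1, hd2, hfilt1, hfilt2, hE, hk]
    calc ((∏ x ∈ S ∩ P, c1 x) * ∏ x ∈ P \ S, c0 x) *
          ((∏ x ∈ S, c1 x) * (∏ x ∈ univ \ S, c0 x) *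
            ((∏ e ∈ G.edgeFinset.filter
              (fun e => (∀ x ∈ e, x ∈ V1) ∧ ∀ x ∈ e, x ∉ S), ce e) *
            ∏ e ∈ G.edgeFinset.filter
              (fun e => (∀ x ∈ e, x ∈ V2) ∧ ∀ x ∈ e, x ∉ S), ce e))
        = ((∏ x ∈ S, c1 x) * ∏ x ∈ S ∩ P, c1 x) *
          ((∏ x ∈ univ \ S, c0 x) * ∏ x ∈ P \ S, c0 x) *
          ((∏ e ∈ G.edgeFinset.filter
              (fun e => (∀ x ∈ e, x ∈ V1) ∧ ∀ x ∈ e, x ∉ S), ce e) *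
            ∏ e ∈ G.edgeFinset.filter
              (fun e => (∀ x ∈ e, x ∈ V2) ∧ ∀ x ∈ e, x ∉ S), ce e) := by ring
      _ = ((∏ x ∈ S ∩ V1, c1 x) * ∏ x ∈ S ∩ V2, c1 x) *
          ((∏ x ∈ V1 \ S, c0 x) * ∏ x ∈ V2 \ S, c0 x) *
          ((∏ e ∈ G.edgeFinset.filter
              (fun e => (∀ x ∈ e, x ∈ V1) ∧ ∀ x ∈ e, x ∉ S), ce e) *
            ∏ e ∈ G.edgeFinset.filter
              (fun e => (∀ x ∈ e, x ∈ V2) ∧ ∀ x ∈ e, x ∉ S), ce e) := by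
            rw [hc1, hc0]
      _ = _ := by ring
end
end

section
/- (Gadget correctness in the general case of reduction D2.) Let m00, m01, m10, m11 be rational numbers with m11 ≠ 0, and let cu1, cu0, cv1, cv0 be rational numbers. Let P be the path graph on three vertices u, x, v with edges ux and xv. Equip P with the cardinality function: c1(u) = cu1, c0(u) = cu0, c1(v) = cv1, c0(v) = cv0, c0(x) = m11, c1(x) = (m00*m11 - m01*m10)/m11, c0(ux) = m01/m11, c0(xv) = m10/m11. Then for all zeta, eta in {0,1}: c(P, u^zeta, v^eta) = c_zeta(u) * c_eta(v) * m_{zeta eta}, where c_0 and c_1 denote the corresponding vertex weights. -/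
open Finset

noncomputable section
open scoped Classical

variable {V : Type*}

/-!
Fixing `u` and `v` leaves only the middle vertex `x` free. If `u` or `v` lies in `S`, then
`x ∉ S`, and its weight `c0(x) = m11` cancels the factor `1 / m11` of the edge missed by `S`, if
any. If neither does, the two choices for `x` contribute `m11 · (m01 / m11) · (m10 / m11)` and
`(m00 m11 - m01 m10) / m11`, which sum to `m00`.
-/

theorem wt_univ [Fintype V] (G : SimpleGraph V) (c1 c0 : V → ℚ) (ce : Sym2 V → ℚ)
    (S : Finset V) :
    wt G c1 c0 ce univ S =
      (∏ v, if v ∈ S then c1 v else c0 v) *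
        ∏ e ∈ G.edgeFinset, if ∀ x ∈ e, x ∉ S then ce e else 1 := by
  rw [wt, prod_ite, prod_filter, filter_mem_eq_inter, univ_inter, filter_not]
  simp only [mem_univ, implies_true, true_and, filter_mem_eq_inter, univ_inter]

abbrev gadgetPath : SimpleGraph (Fin 3) :=
  SimpleGraph.fromRel fun a b : Fin 3 => (a = 0 ∧ b = 1) ∨ (a = 1 ∧ b = 2)

theorem s01_ne_s12 : s((0 : Fin 3), 1) ≠ s(1, 2) := by decide

theorem gadgetPath_edgeFinset [Fintype gadgetPath.edgeSet] :
    gadgetPath.edgeFinset = {s(0, 1), s(1, 2)} := by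
  ext e
  induction e using Sym2.inductionOn with
  | hf a b =>
    simp only [SimpleGraph.mem_edgeFinset, SimpleGraph.mem_edgeSet, SimpleGraph.fromRel_adj,
      mem_insert, mem_singleton, Sym2.eq_iff]
    revert a b; decide

theorem wt_gadgetPath (c1 c0 : Fin 3 → ℚ) (ce : Sym2 (Fin 3) → ℚ) (S : Finset (Fin 3)) :
    wt gadgetPath c1 c0 ce univ S =
      (if 0 ∈ S then c1 0 else c0 0) * (if 1 ∈ S then c1 1 else c0 1) *
        (if 2 ∈ S then c1 2 else c0 2) *
        ((if 0 ∉ S ∧ 1 ∉ S then ce s(0, 1) else 1) * if 1 ∉ S ∧ 2 ∉ S then ce s(1, 2) else 1) := by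
  rw [wt_univ, Fin.prod_univ_three]
  simp only [gadgetPath_edgeFinset, prod_pair s01_ne_s12, Sym2.mem_iff, forall_eq_or_imp,
    forall_eq]
  -- the two sides differ only in their `Decidable` instances: classical in `wt`, `Fin`'s here
  congr!

theorem filter_indepOn_gadgetPath (ζ η : Bool) :
    (indepOn gadgetPath univ).filter (fun S => (0 ∈ S ↔ ζ = true) ∧ (2 ∈ S ↔ η = true)) =
      cond ζ (cond η {{0, 2}} {{0}}) (cond η {{2}} {∅, {1}}) := by
  ext S
  simp only [mem_filter, indepOn, mem_univ, true_and, subset_univ, Indep,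
    SimpleGraph.fromRel_adj]
  cases ζ <;> cases η <;> revert S <;> decide

/-- Gadget correctness in the general case of reduction D2:
on the path `u - x - v` (vertices `0, 1, 2` of `Fin 3`) with
`c1(u) = cu1, c0(u) = cu0, c1(v) = cv1, c0(v) = cv0, c0(x) = m11`,
`c1(x) = (m00*m11 - m01*m10)/m11`, `c0(ux) = m01/m11`, `c0(xv) = m10/m11`,
we have `c(P, u^ζ, v^η) = c_ζ(u) * c_η(v) * m_{ζη}` for all `ζ, η ∈ {0,1}`. -/
theorem totC2_path_gadget (m00 m01 m10 m11 cu1 cu0 cv1 cv0 : ℚ) (hm : m11 ≠ 0)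
    (ζ η : Bool) :
    totC2 (SimpleGraph.fromRel (fun a b : Fin 3 => (a = 0 ∧ b = 1) ∨ (a = 1 ∧ b = 2)))
      ![cu1, (m00 * m11 - m01 * m10) / m11, cv1]
      ![cu0, m11, cv0]
      (fun e => if e = s((0 : Fin 3), (1 : Fin 3)) then m01 / m11
        else if e = s((1 : Fin 3), (2 : Fin 3)) then m10 / m11 else 1)
      univ 0 2 ζ η =
    (cond ζ cu1 cu0) * (cond η cv1 cv0) * (cond ζ (cond η m11 m10) (cond η m01 m00)) := by
  -- `convert`, not `rw`: the filter in `totC2` carries a classical `DecidablePred`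
  rw [totC2, sum_congr (by convert filter_indepOn_gadgetPath ζ η) fun _ _ => rfl]
  cases ζ <;> cases η <;>
    simp only [cond_true, cond_false, sum_singleton, sum_pair (empty_ne_singleton (1 : Fin 3)),
      wt_gadgetPath, mem_insert, mem_singleton, notMem_empty, Fin.reduceEq, Fin.isValue,
      s01_ne_s12.symm, Matrix.cons_val, if_true, if_false, or_true, or_false, not_true,
      not_false_eq_true, and_true, and_false, mul_one] <;>
    field_simp
  ring
end
end

section
/- (Gadget correctness in the rank-one case of reduction D2.) Let m00, m01, m10, m11 be rational numbers with m11 ≠ 0 and m00*m11 = m01*m10, and let cu1, cu0, cv1, cv0 be rational numbers. Let H be the graph on two vertices u, v with no edges, equipped with the cardinality function c'_1(u) = cu1*m11, c'_0(u) = cu0*m01, c'_1(v) = cv1, c'_0(v) = cv0*m10/m11. Then for all zeta, eta in {0,1}: c'(H, u^zeta, v^eta) = c_zeta(u) * c_eta(v) * m_{zeta eta}, where c_1(u) = cu1, c_0(u) = cu0, c_1(v) = cv1, c_0(v) = cv0. -/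
/-!
On the edgeless graph every vertex set is independent and weighs the product of its vertex
weights. Prescribing both vertices of `Fin 2` leaves exactly one set, so
`c'(H, u^ζ, v^η) = c'_ζ(u) * c'_η(v)`, and the four cases are identities in the weights; the case
`ζ = η = 0` is where `m01 * m10 / m11 = m00` is needed.
-/

open Finset

noncomputable section
open scoped Classical

variable {V : Type*}

lemma indepOn_bot_univ [Fintype V] : indepOn (⊥ : SimpleGraph V) univ = univ := by
  ext S; simp [indepOn, Indep]

lemma wt_bot_univ [Fintype V] (c1 c0 : V → ℚ) (ce : Sym2 V → ℚ) (S : Finset V) :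
    wt ⊥ c1 c0 ce univ S = (∏ v ∈ S, c1 v) * ∏ v ∈ Sᶜ, c0 v := by
  rw [wt, compl_eq_univ_sdiff]
  convert mul_one _
  exact prod_eq_one fun e he => by simp at he

lemma fin_two_mem_iff_eq_filter (S : Finset (Fin 2)) (ζ η : Bool) :
    ((0 ∈ S ↔ ζ = true) ∧ (1 ∈ S ↔ η = true)) ↔ S = univ.filter fun i => ![ζ, η] i = true := by
  simp [Finset.ext_iff, Fin.forall_fin_two]

lemma totC2_bot_fin_two (c1 c0 : Fin 2 → ℚ) (ce : Sym2 (Fin 2) → ℚ) (ζ η : Bool) :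
    totC2 ⊥ c1 c0 ce univ 0 1 ζ η = cond ζ (c1 0) (c0 0) * cond η (c1 1) (c0 1) := by
  rw [totC2, indepOn_bot_univ]
  simp only [fin_two_mem_iff_eq_filter, filter_eq', mem_univ, if_true, sum_singleton, wt_bot_univ]
  cases ζ <;> cases η <;> simp [prod_filter, Fin.prod_univ_two, mul_comm]

/-- Gadget correctness in the rank-one case of reduction D2:
on the edgeless graph `H` with two vertices `u, v` (vertices `0, 1` of `Fin 2`)
with `c'_1(u) = cu1*m11, c'_0(u) = cu0*m01, c'_1(v) = cv1, c'_0(v) = cv0*m10/m11`,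
if `m11 ≠ 0` and `m00*m11 = m01*m10`, then
`c'(H, u^ζ, v^η) = c_ζ(u) * c_η(v) * m_{ζη}` for all `ζ, η ∈ {0,1}`. -/
theorem totC2_rank_one_gadget (m00 m01 m10 m11 cu1 cu0 cv1 cv0 : ℚ) (hm : m11 ≠ 0)
    (hrank : m00 * m11 = m01 * m10) (ζ η : Bool) :
    totC2 (⊥ : SimpleGraph (Fin 2))
      ![cu1 * m11, cv1]
      ![cu0 * m01, cv0 * m10 / m11]
      (fun _ => 1)
      univ 0 1 ζ η =
    (cond ζ cu1 cu0) * (cond η cv1 cv0) * (cond ζ (cond η m11 m10) (cond η m01 m00)) := by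
  rw [totC2_bot_fin_two]
  cases ζ <;> cases η <;>
    simp only [cond_true, cond_false, Matrix.cons_val_zero, Matrix.cons_val_one]
  · field_simp
    linear_combination (-(cu0 * cv0)) * hrank
  · ring
  · field_simp
  · ring
end
end
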